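/- Let I ⊆ ℂ[z₁,…,z_d] be a radical homogeneous ideal and let B be the ball algebra on the closed unit ball of ℂ^d. If f ∈ B satisfies f(z) = 0 for every z ∈ V(I) ∩ 𝔹_d (the intersection of the zero locus of I with the open unit ball), then f lies in the closure in B of the set of restrictions of polynomials in I. -/

import Mathlib

open MvPolynomial Metric

noncomputable section

abbrev Cd (d : ℕ) := EuclideanSpace ℂ (Fin d)

abbrev CBall (d : ℕ) : Set (Cd d) := Metric.closedBall (0 : Cd d) 1

instance (d : ℕ) : CompactSpace (CBall d) :=
  isCompact_iff_compactSpace.mp (isCompact_closedBall _ _)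

/-- The `i`-th coordinate function on the closed unit ball. -/
def coordFn (d : ℕ) (i : Fin d) : C(CBall d, ℂ) :=
  ⟨fun z => (z : Cd d) i, by first | fun_prop | exact (continuous_apply i).comp ((PiLp.continuous_ofLp 2 _).comp continuous_subtype_val)⟩

/-- Restriction of a polynomial to the closed unit ball, as an element of
`C(closedBall, ℂ)`. -/
def polyMap (d : ℕ) : MvPolynomial (Fin d) ℂ →ₐ[ℂ] C(CBall d, ℂ) :=
  aeval (coordFn d)

/-- The ball algebra: the closure, in the Banach algebra of continuous functions on
the closed unit ball of ℂ^d with the supremum norm, of the restrictions of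
polynomials. -/
def ballAlg (d : ℕ) : Set C(CBall d, ℂ) := closure (Set.range (polyMap d))

/-- `J` is an ideal of the ball algebra `B`. -/
def IsIdealOfBallAlg (d : ℕ) (J : Set C(CBall d, ℂ)) : Prop :=
  J ⊆ ballAlg d ∧ (0 : C(CBall d, ℂ)) ∈ J ∧
    (∀ f ∈ J, ∀ g ∈ J, f + g ∈ J) ∧ (∀ f ∈ J, ∀ g ∈ ballAlg d, g * f ∈ J)

/-- The self-map of the closed ball given by `z ↦ t z` for `‖t‖ ≤ 1`. -/
def dilatePt (d : ℕ) (t : ℂ) (ht : ‖t‖ ≤ 1) : C(CBall d, CBall d) :=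
  ⟨fun z => ⟨t • (z : Cd d), by
      have hz : ‖(z : Cd d)‖ ≤ 1 := mem_closedBall_zero_iff.mp z.2
      show t • (z : Cd d) ∈ Metric.closedBall 0 1
      rw [mem_closedBall_zero_iff, norm_smul]
      exact mul_le_one₀ ht (norm_nonneg _) hz⟩,
    by exact Continuous.subtype_mk (continuous_subtype_val.const_smul t) _⟩

/-- The dilation `f ↦ (z ↦ f (t z))` on continuous functions on the closed ball. -/
def dilateFn (d : ℕ) (t : ℂ) (ht : ‖t‖ ≤ 1) (f : C(CBall d, ℂ)) : C(CBall d, ℂ) :=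
  f.comp (dilatePt d t ht)

/-- A closed ideal of the ball algebra is homogeneous if it is invariant under all
dilations `z ↦ t z`, `|t| < 1`. -/
def IsHomogBallIdeal (d : ℕ) (J : Set C(CBall d, ℂ)) : Prop :=
  ∀ f ∈ J, ∀ t : ℂ, ∀ ht : ‖t‖ < 1, dilateFn d t ht.le f ∈ J

/-- An ideal of polynomials is homogeneous if it contains the homogeneous
components of each of its elements. -/
def IsHomogeneousIdeal {d : ℕ} (I : Ideal (MvPolynomial (Fin d) ℂ)) : Prop :=
  ∀ p ∈ I, ∀ n : ℕ, homogeneousComponent n p ∈ I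

/-!
For `f` in the ball algebra let `F_k f = homogPart d k f` be the `k`-th Fourier coefficient of
`θ ↦ f (e^{iθ} z)`. On a polynomial `F_k` picks out the homogeneous component of degree `k`, and
`F_k` is a contraction, so `F_k f` is a uniform limit of homogeneous polynomials of degree `k`,
hence (finite dimension) itself such a polynomial `h_k`. Since `V(I)` is a cone, `h_k` vanishes on
`V(I) ∩ 𝔹_d`, hence on `V(I)`, and the Nullstellensatz puts `h_k` in `√I = I`. Finally, for
`|t| < 1` the dilation `z ↦ f (t z)` is the uniform sum of `∑ t^k h_k` (true for polynomials, and
the partial sum operators are uniformly bounded by `1 / (1 - |t|)`), and `f (t ·) → f` uniformly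
as `t → 1`.
-/

open Complex Filter Topology intervalIntegral
open scoped Real

namespace MvPolynomial

variable {σ R : Type*} [CommSemiring R]

theorem IsHomogeneous.eval_smul {p : MvPolynomial σ R} {n : ℕ} (hp : p.IsHomogeneous n)
    (t : R) (x : σ → R) : eval (t • x) p = t ^ n * eval x p := by
  simp only [eval_eq, Finset.mul_sum]
  refine Finset.sum_congr rfl fun s hs => ?_
  simp only [Pi.smul_apply, smul_eq_mul, mul_pow, Finset.prod_mul_distrib,
    Finset.prod_pow_eq_pow_sum, ← hp.degree_eq_sum_deg_support hs]
  ring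

theorem sum_range_homogeneousComponent (p : MvPolynomial σ R) {N : ℕ}
    (hN : p.totalDegree < N) : ∑ k ∈ Finset.range N, homogeneousComponent k p = p := by
  rw [← Finset.sum_range_add_sum_Ico _ hN, sum_homogeneousComponent, Finset.sum_eq_zero, add_zero]
  exact fun k hk => homogeneousComponent_eq_zero _ _ (Finset.mem_Ico.1 hk).1

theorem eval_smul_eq_sum (p : MvPolynomial σ R) (t : R) (x : σ → R) {N : ℕ}
    (hN : p.totalDegree < N) :
    eval (t • x) p = ∑ k ∈ Finset.range N, t ^ k * eval x (homogeneousComponent k p) := by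
  conv_lhs => rw [← sum_range_homogeneousComponent p hN]
  simp only [map_sum, (homogeneousComponent_isHomogeneous _ p).eval_smul]

end MvPolynomial

namespace IsHomogeneousIdeal

variable {d : ℕ} {I : Ideal (MvPolynomial (Fin d) ℂ)}

theorem smul_mem_zeroLocus (hI : IsHomogeneousIdeal I) {x : Fin d → ℂ} (hx : x ∈ zeroLocus ℂ I)
    (t : ℂ) : t • x ∈ zeroLocus ℂ I := fun p hp => by
  change eval (t • x) p = 0
  rw [eval_smul_eq_sum p t x (Nat.lt_succ_self _)]
  exact Finset.sum_eq_zero fun k _ => mul_eq_zero_of_right _ (hx _ (hI p hp k))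

theorem mem_of_isHomogeneous_of_eval_eq_zero (hI : IsHomogeneousIdeal I) (hrad : I.IsRadical)
    {p : MvPolynomial (Fin d) ℂ} {n : ℕ} (hp : p.IsHomogeneous n) {U : Set (Fin d → ℂ)}
    (hU : U ∈ 𝓝 0) (hpU : ∀ x ∈ zeroLocus ℂ I, x ∈ U → eval x p = 0) : p ∈ I := by
  suffices p ∈ vanishingIdeal ℂ (zeroLocus ℂ I) by
    rwa [vanishingIdeal_zeroLocus_eq_radical, hrad.radical] at this
  refine mem_vanishingIdeal_iff.2 fun x hx => ?_
  have hsmall : ∀ᶠ c : ℂ in 𝓝[≠] 0, c • x ∈ U ∧ c ≠ 0 := by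
    refine Eventually.and ?_ self_mem_nhdsWithin
    have : Tendsto (fun c : ℂ => c • x) (𝓝 0) (𝓝 0) := by
      simpa using (tendsto_id (x := 𝓝 (0 : ℂ))).smul_const x
    exact (this.mono_left nhdsWithin_le_nhds).eventually hU
  obtain ⟨c, hcU, hc⟩ := hsmall.exists
  have := hpU _ (hI.smul_mem_zeroLocus hx c) hcU
  rw [hp.eval_smul] at this
  exact (mul_eq_zero.1 this).resolve_left (pow_ne_zero _ hc)

end IsHomogeneousIdeal

theorem integral_exp_int_mul_mul_I (n : ℤ) :
    ∫ θ in (0 : ℝ)..2 * π, cexp (n * θ * I) = if n = 0 then (2 * π : ℂ) else 0 := by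
  split_ifs with hn
  · simp [hn]
  · have hc : (n : ℂ) * I ≠ 0 := mul_ne_zero (Int.cast_ne_zero.2 hn) I_ne_zero
    have h2π : (n : ℂ) * I * ((2 * π : ℝ) : ℂ) = n * (2 * π * I) := by push_cast; ring
    simp only [mul_right_comm _ _ I]
    rw [integral_exp_mul_complex hc, h2π, exp_int_mul_two_pi_mul_I]
    simp

section BallAlgebra

variable {d : ℕ}

def rotate (d : ℕ) (θ : ℝ) : C(CBall d, CBall d) :=
  dilatePt d (cexp (θ * I)) (norm_exp_ofReal_mul_I θ).le

theorem polyMap_apply (p : MvPolynomial (Fin d) ℂ) (z : CBall d) :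
    polyMap d p z = eval (fun i => (z : Cd d) i) p := by
  induction p using MvPolynomial.induction_on with
  | C a => simp [polyMap]
  | add p q hp hq => simp [hp, hq]
  | mul_X p i hp =>
    rw [map_mul, ContinuousMap.mul_apply, hp, eval_mul, eval_X]
    simp [polyMap, coordFn]

theorem dilateFn_polyMap (t : ℂ) (ht : ‖t‖ ≤ 1) (p : MvPolynomial (Fin d) ℂ) {N : ℕ}
    (hN : p.totalDegree < N) :
    dilateFn d t ht (polyMap d p) =
      ∑ k ∈ Finset.range N, t ^ k • polyMap d (homogeneousComponent k p) := by
  ext z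
  simp only [dilateFn, ContinuousMap.comp_apply, polyMap_apply, ContinuousMap.coe_sum,
    ContinuousMap.coe_smul, Finset.sum_apply, Pi.smul_apply, smul_eq_mul]
  exact eval_smul_eq_sum p t _ hN

theorem exists_dist_dilateFn_lt (f : C(CBall d, ℂ)) {ε : ℝ} (hε : 0 < ε) :
    ∃ (t : ℂ) (ht : ‖t‖ < 1), dist (dilateFn d t ht.le f) f < ε := by
  obtain ⟨δ, hδ, hf⟩ := Metric.uniformContinuous_iff.1
    (CompactSpace.uniformContinuous_of_continuous f.continuous) ε hε
  obtain ⟨s, hs0, hs1, hsδ⟩ : ∃ s : ℝ, 0 ≤ s ∧ s < 1 ∧ 1 - s < δ :=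
    ⟨max 0 (1 - δ / 2), le_max_left _ _, max_lt one_pos (by linarith),
      by linarith [le_max_right 0 (1 - δ / 2)]⟩
  refine ⟨s, by rwa [norm_real, Real.norm_of_nonneg hs0],
    (ContinuousMap.dist_lt_iff hε).2 fun z => hf ?_⟩
  have hz : ‖(z : Cd d)‖ ≤ 1 := mem_closedBall_zero_iff.1 z.2
  calc dist (dilatePt d s _ z) z = ‖((s : ℂ) - 1) • (z : Cd d)‖ := by
        rw [Subtype.dist_eq, dist_eq_norm, sub_smul, one_smul]; rfl
    _ = (1 - s) * ‖(z : Cd d)‖ := by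
        rw [norm_smul, ← ofReal_one, ← ofReal_sub, norm_real, Real.norm_of_nonpos (by linarith),
          neg_sub]
    _ < δ := by nlinarith [norm_nonneg (z : Cd d)]

theorem norm_rotate (θ : ℝ) (z : CBall d) : ‖(rotate d θ z : Cd d)‖ = ‖(z : Cd d)‖ := by
  simp [rotate, dilatePt, norm_smul, norm_exp_ofReal_mul_I]

theorem continuous_rotate_integrand (f : C(CBall d, ℂ)) (k : ℕ) :
    Continuous fun q : CBall d × ℝ => cexp (-(k * q.2 * I)) * f (rotate d q.2 q.1) := by
  have hrot : Continuous fun q : CBall d × ℝ => rotate d q.2 q.1 :=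
    (by fun_prop : Continuous fun q : CBall d × ℝ => cexp (q.2 * I) • (q.1 : Cd d)).subtype_mk _
  fun_prop

def homogPartₗ (d k : ℕ) : C(CBall d, ℂ) →ₗ[ℂ] C(CBall d, ℂ) where
  toFun f := ⟨fun z => (2 * π : ℂ)⁻¹ *
      ∫ θ in (0 : ℝ)..2 * π, cexp (-(k * θ * I)) * f (rotate d θ z),
    continuous_const.mul <|
      continuous_parametric_intervalIntegral_of_continuous' (continuous_rotate_integrand f k) _ _⟩
  map_add' f g := by
    ext z
    have hi (h : C(CBall d, ℂ)) : IntervalIntegrable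
        (fun θ : ℝ => cexp (-(k * θ * I)) * h (rotate d θ z)) MeasureTheory.volume 0 (2 * π) :=
      ((continuous_rotate_integrand h k).comp (Continuous.prodMk_right z)).intervalIntegrable _ _
    simp only [ContinuousMap.coe_mk, ContinuousMap.add_apply, mul_add]
    rw [integral_add (hi f) (hi g), mul_add]
  map_smul' c f := by
    ext z
    simp only [ContinuousMap.coe_mk, ContinuousMap.smul_apply, smul_eq_mul, RingHom.id_apply,
      mul_left_comm _ c, integral_const_mul]

theorem homogPartₗ_apply (k : ℕ) (f : C(CBall d, ℂ)) (z : CBall d) :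
    homogPartₗ d k f z =
      (2 * π : ℂ)⁻¹ * ∫ θ in (0 : ℝ)..2 * π, cexp (-(k * θ * I)) * f (rotate d θ z) := rfl

theorem norm_homogPartₗ_apply_le (k : ℕ) (f : C(CBall d, ℂ)) : ‖homogPartₗ d k f‖ ≤ ‖f‖ := by
  refine (ContinuousMap.norm_le _ (norm_nonneg f)).2 fun z => ?_
  have hint : ‖∫ θ in (0 : ℝ)..2 * π, cexp (-(k * θ * I)) * f (rotate d θ z)‖ ≤
      ‖f‖ * |2 * π - 0| :=
    norm_integral_le_of_norm_le_const fun θ _ => by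
      rw [norm_mul, ← ofReal_natCast, ← ofReal_mul, ← neg_mul, ← ofReal_neg,
        norm_exp_ofReal_mul_I, one_mul]
      exact f.norm_coe_le_norm _
  rw [sub_zero, abs_of_pos (by positivity)] at hint
  rw [homogPartₗ_apply, norm_mul, norm_inv, ← ofReal_ofNat, ← ofReal_mul, norm_real,
    Real.norm_of_nonneg (by positivity)]
  calc (2 * π)⁻¹ * ‖∫ θ in (0 : ℝ)..2 * π, cexp (-(k * θ * I)) * f (rotate d θ z)‖
      ≤ (2 * π)⁻¹ * (‖f‖ * (2 * π)) := by gcongr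
    _ = ‖f‖ := by field_simp

def homogPart (d k : ℕ) : C(CBall d, ℂ) →L[ℂ] C(CBall d, ℂ) :=
  (homogPartₗ d k).mkContinuous 1 fun f => by simpa using norm_homogPartₗ_apply_le k f

theorem homogPart_apply (k : ℕ) (f : C(CBall d, ℂ)) (z : CBall d) :
    homogPart d k f z =
      (2 * π : ℂ)⁻¹ * ∫ θ in (0 : ℝ)..2 * π, cexp (-(k * θ * I)) * f (rotate d θ z) := rfl

theorem norm_homogPart_le (k : ℕ) : ‖homogPart d k‖ ≤ 1 :=
  LinearMap.mkContinuous_norm_le _ zero_le_one _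

theorem homogPart_polyMap (k : ℕ) (p : MvPolynomial (Fin d) ℂ) :
    homogPart d k (polyMap d p) = polyMap d (homogeneousComponent k p) := by
  ext z
  obtain ⟨N, hpN, hkN⟩ : ∃ N, p.totalDegree < N ∧ k < N :=
    ⟨max p.totalDegree k + 1, Nat.lt_succ_of_le (le_max_left _ _),
      Nat.lt_succ_of_le (le_max_right _ _)⟩
  have hexpand (θ : ℝ) : cexp (-(k * θ * I)) * polyMap d p (rotate d θ z) =
      ∑ m ∈ Finset.range N,
        cexp (((m - k : ℤ) : ℂ) * θ * I) * polyMap d (homogeneousComponent m p) z := by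
    rw [rotate, ← ContinuousMap.comp_apply, ← dilateFn, dilateFn_polyMap _ _ p hpN,
      ContinuousMap.sum_apply, Finset.mul_sum]
    refine Finset.sum_congr rfl fun m _ => ?_
    rw [ContinuousMap.smul_apply, smul_eq_mul, ← mul_assoc, ← Complex.exp_nat_mul,
      ← Complex.exp_add]
    push_cast
    ring_nf
  have hint (m : ℕ) : IntervalIntegrable
      (fun θ : ℝ => cexp (((m - k : ℤ) : ℂ) * θ * I) * polyMap d (homogeneousComponent m p) z)
      MeasureTheory.volume 0 (2 * π) := by
    apply Continuous.intervalIntegrable; fun_prop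
  simp only [homogPart_apply, hexpand, integral_finsetSum fun m _ => hint m,
    integral_mul_const, integral_exp_int_mul_mul_I, sub_eq_zero, Nat.cast_inj, ite_mul, zero_mul,
    Finset.sum_ite_eq', Finset.mem_range.2 hkN, if_true]
  rw [← mul_assoc, inv_mul_cancel₀ (by simp [Real.pi_ne_zero]), one_mul]

theorem homogPart_apply_eq_zero_of_forall_rotate (k : ℕ) {f : C(CBall d, ℂ)} {z : CBall d}
    (hf : ∀ θ : ℝ, f (rotate d θ z) = 0) : homogPart d k f z = 0 := by
  simp [homogPart_apply, hf]

theorem homogPart_mem_map_homogeneousSubmodule {f : C(CBall d, ℂ)} (hf : f ∈ ballAlg d)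
    (k : ℕ) :
    homogPart d k f ∈ (homogeneousSubmodule (Fin d) ℂ k).map (polyMap d).toLinearMap := by
  set T := (homogeneousSubmodule (Fin d) ℂ k).map (polyMap d).toLinearMap
  have : FiniteDimensional ℂ (homogeneousSubmodule (Fin d) ℂ k) :=
    Module.Finite.iff_fg.2 (homogeneousSubmodule_fg _ _ k)
  have hT : Set.range (polyMap d) ⊆ homogPart d k ⁻¹' T := by
    rintro _ ⟨p, rfl⟩
    rw [Set.mem_preimage, homogPart_polyMap]
    exact Submodule.mem_map_of_mem (homogeneousComponent_isHomogeneous k p)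
  exact closure_minimal hT (T.closed_of_finiteDimensional.preimage (homogPart d k).continuous) hf

theorem tendsto_sum_homogPart {f : C(CBall d, ℂ)} (hf : f ∈ ballAlg d) {t : ℂ} (ht : ‖t‖ < 1) :
    Tendsto (fun N => ∑ k ∈ Finset.range N, t ^ k • homogPart d k f) atTop
      (𝓝 (dilateFn d t ht.le f)) := by
  set S : ℕ → C(CBall d, ℂ) →L[ℂ] C(CBall d, ℂ) :=
    fun N => ∑ k ∈ Finset.range N, t ^ k • homogPart d k
  have hS_le (N : ℕ) : ‖S N‖ ≤ (1 - ‖t‖)⁻¹ := calc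
    ‖S N‖ ≤ ∑ k ∈ Finset.range N, ‖t‖ ^ k := by
      refine (norm_sum_le _ _).trans (Finset.sum_le_sum fun k _ => ?_)
      rw [norm_smul, norm_pow]
      exact mul_le_of_le_one_right (by positivity) (norm_homogPart_le k)
    _ ≤ (1 - ‖t‖)⁻¹ := by
      rw [← tsum_geometric_of_lt_one (norm_nonneg t) ht]
      exact (summable_geometric_of_lt_one (norm_nonneg t) ht).sum_le_tsum _
        fun k _ => by positivity
  have hequi : Equicontinuous ((↑) ∘ S) :=
    ((NormedSpace.equicontinuous_TFAE S).out 1 5).2 (⟨_, hS_le⟩ : ∃ C, ∀ N, ‖S N‖ ≤ C)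
  have hclosed := hequi.isClosed_setOfPred_tendsto (l := atTop)
    (ContinuousMap.continuous_precomp (dilatePt d t ht.le))
  have hpoly : Set.range (polyMap d) ⊆
      {g | Tendsto (fun N => S N g) atTop (𝓝 (dilateFn d t ht.le g))} := by
    rintro _ ⟨p, rfl⟩
    refine tendsto_atTop_of_eventually_const (i₀ := p.totalDegree + 1) fun N hN => ?_
    simp only [S, sum_apply, smul_apply, homogPart_polyMap]
    exact (dilateFn_polyMap t ht.le p hN).symm
  simpa [S] using closure_minimal hpoly hclosed hf

end BallAlgebra

/-- If `I` is a radical homogeneous ideal of ℂ[z₁,…,z_d] and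
`f` belongs to the ball algebra and vanishes at every point of `V(I) ∩ 𝔹_d`, then
`f` lies in the closure (in the ball algebra) of the restrictions of members of
`I`. -/
theorem stmt14 (d : ℕ) (I : Ideal (MvPolynomial (Fin d) ℂ))
    (hrad : I.IsRadical) (hhom : IsHomogeneousIdeal I)
    (f : C(CBall d, ℂ)) (hf : f ∈ ballAlg d)
    (hvanish : ∀ z : CBall d, ‖(z : Cd d)‖ < 1 →
      (∀ p ∈ I, eval (fun i => (z : Cd d) i) p = 0) → f z = 0) :
    f ∈ closure (polyMap d '' (I : Set (MvPolynomial (Fin d) ℂ))) := by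
  choose h h_hom h_map using fun k =>
    Submodule.mem_map.1 (homogPart_mem_map_homogeneousSubmodule hf k)
  have hU : WithLp.toLp 2 ⁻¹' Metric.ball (0 : Cd d) 1 ∈ 𝓝 (0 : Fin d → ℂ) :=
    (PiLp.continuous_toLp 2 _).continuousAt.preimage_mem_nhds (Metric.ball_mem_nhds _ one_pos)
  have h_mem (k : ℕ) : h k ∈ I := by
    refine hhom.mem_of_isHomogeneous_of_eval_eq_zero hrad (h_hom k) hU fun x hx hxU => ?_
    set z : CBall d := ⟨WithLp.toLp 2 x, Metric.ball_subset_closedBall hxU⟩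
    have hz : (z : Cd d).ofLp ∈ zeroLocus ℂ I := hx
    have hz1 : ‖(z : Cd d)‖ < 1 := mem_ball_zero_iff.1 hxU
    have := homogPart_apply_eq_zero_of_forall_rotate k fun θ =>
      hvanish _ ((norm_rotate θ z).trans_lt hz1) (hhom.smul_mem_zeroLocus hz _)
    rwa [← h_map k, AlgHom.toLinearMap_apply, polyMap_apply] at this
  have h_dilate (t : ℂ) (ht : ‖t‖ < 1) : dilateFn d t ht.le f ∈ closure (polyMap d '' I) :=
    mem_closure_of_tendsto (tendsto_sum_homogPart hf ht) <| Eventually.of_forall fun N =>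
      ⟨∑ k ∈ Finset.range N, t ^ k • h k, I.sum_mem fun k _ => I.smul_of_tower_mem _ (h_mem k),
        by simp [← h_map]⟩
  rw [← closure_closure]
  refine Metric.mem_closure_iff.2 fun ε hε => ?_
  obtain ⟨t, ht, hdist⟩ := exists_dist_dilateFn_lt f hε
  exact ⟨_, h_dilate t ht, by rwa [dist_comm]⟩
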